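/- Let F : {-1,1}^k → {-1,1} with μ-biased Fourier coefficients for a product distribution μ, let ∅ ≠ S ⊆ [k] with F̃(S) ≠ 0, and let j ∈ S. Then F̃(S)²·log₂(∏_{i∈S}σ_i²/F̃(S)²) ≤ (2^{2k}/ln 2)·Var_μ[D_{φ^μ_j}F], where σ_i² = 1 − μ_i² and D_{φ^μ_j}F = σ_j·D_{x_j}F with D_{x_j}F(x) = (F(x^{j←1}) − F(x^{j←-1}))/2. -/

import Mathlib

open Finset Real

noncomputable section

/-- ±1 encoding of a Boolean. -/
def b2r (b : Bool) : ℝ := if b then 1 else -1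

variable {ι : Type*} [Fintype ι] [DecidableEq ι]

/-- Uniform-distribution Fourier coefficient `f̂(S) = E[f(x) ∏_{i∈S} x_i]`. -/
def coeff (f : (ι → Bool) → ℝ) (S : Finset ι) : ℝ :=
  (∑ x : ι → Bool, f x * ∏ i ∈ S, b2r (x i)) / (Fintype.card (ι → Bool) : ℝ)

/-- Total influence `Inf[f] = ∑_S |S| f̂(S)²`. -/
def totalInf (f : (ι → Bool) → ℝ) : ℝ :=
  ∑ S : Finset ι, (S.card : ℝ) * (coeff f S) ^ 2

/-- Spectral entropy `H[f] = ∑_S f̂(S)² log₂(1/f̂(S)²)`. -/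
def specEnt (f : (ι → Bool) → ℝ) : ℝ :=
  ∑ S : Finset ι, (coeff f S) ^ 2 * Real.logb 2 (1 / (coeff f S) ^ 2)

/-- Variance `Var[f] = ∑_{S ≠ ∅} f̂(S)²`. -/
def fvariance (f : (ι → Bool) → ℝ) : ℝ :=
  ∑ S ∈ (univ : Finset (Finset ι)).erase ∅, (coeff f S) ^ 2

/-- Weight of the point `x` under the product distribution with biases `μ` (`E[x i] = μ i`). -/
def bweight (μ : ι → ℝ) (x : ι → Bool) : ℝ :=
  ∏ i, (if x i then (1 + μ i) / 2 else (1 - μ i) / 2)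

/-- Expectation under the μ-biased product distribution. -/
def bexp (μ : ι → ℝ) (f : (ι → Bool) → ℝ) : ℝ :=
  ∑ x : ι → Bool, bweight μ x * f x

/-- μ-biased Fourier character `φ^μ_S(x) = ∏_{i∈S} (x_i − μ_i)/σ_i`. -/
def bchi (μ : ι → ℝ) (S : Finset ι) (x : ι → Bool) : ℝ :=
  ∏ i ∈ S, (b2r (x i) - μ i) / Real.sqrt (1 - μ i ^ 2)

/-- μ-biased Fourier coefficient `f̃(S) = E_μ[f φ^μ_S]`. -/
def bcoeff (μ : ι → ℝ) (f : (ι → Bool) → ℝ) (S : Finset ι) : ℝ :=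
  bexp μ fun x => f x * bchi μ S x

/-- μ-biased total influence `Inf^μ[f] = ∑_S |S| f̃(S)²`. -/
def bInf (μ : ι → ℝ) (f : (ι → Bool) → ℝ) : ℝ :=
  ∑ S : Finset ι, (S.card : ℝ) * (bcoeff μ f S) ^ 2

/-- μ-biased variance via Fourier coefficients `Var_μ[f] = ∑_{S ≠ ∅} f̃(S)²`. -/
def bVar (μ : ι → ℝ) (f : (ι → Bool) → ℝ) : ℝ :=
  ∑ S ∈ (univ : Finset (Finset ι)).erase ∅, (bcoeff μ f S) ^ 2

/-- Degree-≥1 μ-biased spectral entropy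
`H^μ[f^{≥1}] = ∑_{S≠∅} f̃(S)² log₂(∏_{i∈S} σ_i² / f̃(S)²)`. -/
def bEnt1 (μ : ι → ℝ) (f : (ι → Bool) → ℝ) : ℝ :=
  ∑ S ∈ (univ : Finset (Finset ι)).erase ∅,
    (bcoeff μ f S) ^ 2 * Real.logb 2 ((∏ i ∈ S, (1 - μ i ^ 2)) / (bcoeff μ f S) ^ 2)

/-- Full μ-biased spectral entropy (sum over all `S`). -/
def bEnt (μ : ι → ℝ) (f : (ι → Bool) → ℝ) : ℝ :=
  ∑ S : Finset ι,
    (bcoeff μ f S) ^ 2 * Real.logb 2 ((∏ i ∈ S, (1 - μ i ^ 2)) / (bcoeff μ f S) ^ 2)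

/-- Probabilistic variance under the μ-biased product distribution. -/
def bVarFn (μ : ι → ℝ) (f : (ι → Bool) → ℝ) : ℝ :=
  bexp μ (fun x => (f x - bexp μ f) ^ 2)

/-- All biases lie strictly between −1 and 1. -/
def validBias (μ : ι → ℝ) : Prop := ∀ i, -1 < μ i ∧ μ i < 1

/-- Discrete derivative `D_{x_j} f`. -/
def Dx (j : ι) (f : (ι → Bool) → ℝ) (x : ι → Bool) : ℝ :=
  (f (Function.update x j true) - f (Function.update x j false)) / 2

/-- μ-biased discrete derivative `D_{φ^μ_j} f = σ_j D_{x_j} f`. -/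
def Dphi (μ : ι → ℝ) (j : ι) (f : (ι → Bool) → ℝ) (x : ι → Bool) : ℝ :=
  Real.sqrt (1 - μ j ^ 2) * Dx j f x

-- === auxiliary lemmas for stmt14 ===
section Aux
variable {ι : Type*} [Fintype ι] [DecidableEq ι]

set_option linter.unusedSectionVars false

lemma sq_pos_of_bias {μ : ι → ℝ} (hμ : validBias μ) (i : ι) : 0 < 1 - μ i ^ 2 := by
  have h := hμ i; nlinarith [h.1, h.2]

lemma sigma_pos {μ : ι → ℝ} (hμ : validBias μ) (i : ι) : 0 < Real.sqrt (1 - μ i ^ 2) :=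
  Real.sqrt_pos.2 (sq_pos_of_bias hμ i)

lemma sigma_sq {μ : ι → ℝ} (hμ : validBias μ) (i : ι) :
    Real.sqrt (1 - μ i ^ 2) ^ 2 = 1 - μ i ^ 2 :=
  Real.sq_sqrt (sq_pos_of_bias hμ i).le

lemma bweight_nonneg {μ : ι → ℝ} (hμ : validBias μ) (x : ι → Bool) : 0 ≤ bweight μ x := by
  refine Finset.prod_nonneg fun i _ => ?_
  have h := hμ i
  split <;> linarith [h.1, h.2]

lemma bweight_sum_one (μ : ι → ℝ) : ∑ x : ι → Bool, bweight μ x = 1 := by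
  unfold bweight
  rw [← Fintype.prod_sum (fun (i : ι) (b : Bool) => if b = true then (1 + μ i) / 2 else (1 - μ i) / 2),
    Fintype.prod_eq_one]
  intro i
  simp
  ring

lemma bexp_add (μ : ι → ℝ) (f g : (ι → Bool) → ℝ) :
    bexp μ (fun x => f x + g x) = bexp μ f + bexp μ g := by
  unfold bexp; rw [← Finset.sum_add_distrib]; congr 1; funext x; ring

lemma bexp_mul_const (μ : ι → ℝ) (c : ℝ) (f : (ι → Bool) → ℝ) :
    bexp μ (fun x => c * f x) = c * bexp μ f := by
  unfold bexp; rw [Finset.mul_sum]; congr 1; funext x; ring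

lemma bexp_const (μ : ι → ℝ) (c : ℝ) : bexp μ (fun _ => c) = c := by
  unfold bexp
  rw [← Finset.sum_mul, bweight_sum_one, one_mul]

lemma bexp_mono {μ : ι → ℝ} (hμ : validBias μ) {f g : (ι → Bool) → ℝ}
    (h : ∀ x, f x ≤ g x) : bexp μ f ≤ bexp μ g :=
  Finset.sum_le_sum fun x _ => mul_le_mul_of_nonneg_left (h x) (bweight_nonneg hμ x)

lemma bexp_nonneg {μ : ι → ℝ} (hμ : validBias μ) {f : (ι → Bool) → ℝ}
    (h : ∀ x, 0 ≤ f x) : 0 ≤ bexp μ f := by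
  have := bexp_mono hμ (f := fun _ => (0:ℝ)) (g := f) h
  rwa [bexp_const] at this

lemma abs_bexp_le {μ : ι → ℝ} (hμ : validBias μ) (f : (ι → Bool) → ℝ) :
    |bexp μ f| ≤ bexp μ (fun x => |f x|) := by
  refine (Finset.abs_sum_le_sum_abs _ _).trans ?_
  refine Finset.sum_le_sum fun x _ => ?_
  rw [abs_mul, abs_of_nonneg (bweight_nonneg hμ x)]

lemma flip_invol (a : ι) : Function.Involutive (fun x : ι → Bool => Function.update x a (!(x a))) := by
  intro x
  simp only [Function.update_self, Function.update_idem, Bool.not_not]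
  exact Function.update_eq_self a x

lemma sum_split (a : ι) (A : (ι → Bool) → ℝ) :
    ∑ x : ι → Bool, A x
      = ∑ x : ι → Bool, (if x a then A x + A (Function.update x a false) else 0) := by
  have h1 : ∑ x : ι → Bool, A x
      = ∑ x : ι → Bool, ((if x a then A x else 0) + (if x a then 0 else A x)) := by
    refine Finset.sum_congr rfl fun x _ => ?_
    by_cases h : x a <;> simp [h]
  have h2 : ∑ x : ι → Bool, (if x a then 0 else A x)
      = ∑ x : ι → Bool, (if x a then A (Function.update x a false) else 0) := by
    rw [← Equiv.sum_comp ((flip_invol (ι := ι) a).toPerm) (fun x => if x a then 0 else A x)]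
    refine Finset.sum_congr rfl fun x _ => ?_
    simp only [Function.Involutive.coe_toPerm]
    by_cases h : x a <;> simp [h]
  rw [h1, Finset.sum_add_distrib, h2, ← Finset.sum_add_distrib]
  refine Finset.sum_congr rfl fun x _ => ?_
  by_cases h : x a <;> simp [h]

lemma bweight_update (μ : ι → ℝ) (x : ι → Bool) (a : ι) (b : Bool) :
    bweight μ (Function.update x a b)
      = (if b then (1 + μ a) / 2 else (1 - μ a) / 2)
        * ∏ i ∈ univ.erase a, (if x i then (1 + μ i) / 2 else (1 - μ i) / 2) := by
  unfold bweight
  rw [← Finset.mul_prod_erase univ _ (mem_univ a)]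
  congr 1
  · simp
  · refine Finset.prod_congr rfl fun i hi => ?_
    rw [Function.update_of_ne (Finset.ne_of_mem_erase hi)]

lemma bweight_factor (μ : ι → ℝ) (x : ι → Bool) (a : ι) :
    bweight μ x
      = (if x a then (1 + μ a) / 2 else (1 - μ a) / 2)
        * ∏ i ∈ univ.erase a, (if x i then (1 + μ i) / 2 else (1 - μ i) / 2) := by
  unfold bweight
  rw [← Finset.mul_prod_erase univ _ (mem_univ a)]

lemma bexp_split (μ : ι → ℝ) (a : ι) (f : (ι → Bool) → ℝ) :
    bexp μ f = bexp μ (fun x => (1 + μ a) / 2 * f (Function.update x a true)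
      + (1 - μ a) / 2 * f (Function.update x a false)) := by
  unfold bexp
  rw [sum_split a (fun x => bweight μ x * f x),
      sum_split a (fun x => bweight μ x * ((1 + μ a) / 2 * f (Function.update x a true)
        + (1 - μ a) / 2 * f (Function.update x a false)))]
  refine Finset.sum_congr rfl fun x _ => ?_
  by_cases h : x a
  · simp only [h, if_true]
    have hx : Function.update x a true = x := by
      conv_rhs => rw [← Function.update_eq_self a x]
      rw [h]
    have h1 : Function.update (Function.update x a false) a true = x := by
      rw [Function.update_idem, hx]
    have h2 : Function.update (Function.update x a false) a false
        = Function.update x a false := by rw [Function.update_idem]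
    rw [hx, h1, h2, bweight_factor μ x a, bweight_update μ x a false, h]
    simp only [Bool.false_eq_true, if_false, if_true]
    ring
  · simp [h]

-- Fourier coefficient / derivative relation
lemma bcoeff_insert {μ : ι → ℝ} (hμ : validBias μ) (a : ι) (T : Finset ι) (ha : a ∉ T)
    (f : (ι → Bool) → ℝ) :
    bcoeff μ f (insert a T) = Real.sqrt (1 - μ a ^ 2) * bcoeff μ (Dx a f) T := by
  have hchi : ∀ (x : ι → Bool) (b : Bool), bchi μ T (Function.update x a b) = bchi μ T x := by
    intro x b
    refine Finset.prod_congr rfl fun i hi => ?_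
    rw [Function.update_of_ne]
    intro h; exact ha (h ▸ hi)
  unfold bcoeff
  rw [bexp_split μ a (fun x => f x * bchi μ (insert a T) x), ← bexp_mul_const]
  congr 1
  funext x
  have hup : ∀ b : Bool, bchi μ (insert a T) (Function.update x a b)
      = ((b2r b - μ a) / Real.sqrt (1 - μ a ^ 2)) * bchi μ T x := by
    intro b
    unfold bchi
    rw [Finset.prod_insert ha, Function.update_self]
    rw [show (∏ i ∈ T, (b2r (Function.update x a b i) - μ i) / Real.sqrt (1 - μ i ^ 2))
        = bchi μ T (Function.update x a b) from rfl, hchi]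
    rfl
  rw [hup true, hup false]
  have hs := sigma_sq hμ a
  have hs0 := (sigma_pos hμ a).ne'
  unfold Dx b2r
  simp only [if_true, Bool.false_eq_true, if_false]
  field_simp
  linear_combination (-(bchi μ T x * (f (Function.update x a true) - f (Function.update x a false)))) * hs

-- iterated derivatives along a list
def DxL (l : List ι) (f : (ι → Bool) → ℝ) : (ι → Bool) → ℝ :=
  l.foldl (fun g i => Dx i g) f

def DphiL (μ : ι → ℝ) (l : List ι) (f : (ι → Bool) → ℝ) : (ι → Bool) → ℝ :=
  l.foldl (fun g i => Dphi μ i g) f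

lemma DxL_nil (f : (ι → Bool) → ℝ) : DxL ([] : List ι) f = f := rfl
lemma DxL_cons (a : ι) (l : List ι) (f : (ι → Bool) → ℝ) :
    DxL (a :: l) f = DxL l (Dx a f) := rfl
lemma DphiL_cons (μ : ι → ℝ) (a : ι) (l : List ι) (f : (ι → Bool) → ℝ) :
    DphiL μ (a :: l) f = DphiL μ l (Dphi μ a f) := rfl

lemma bcoeff_eq_DxL {μ : ι → ℝ} (hμ : validBias μ) :
    ∀ (l : List ι), l.Nodup → ∀ f,
      bcoeff μ f l.toFinset
        = (∏ i ∈ l.toFinset, Real.sqrt (1 - μ i ^ 2)) * bexp μ (DxL l f) := by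
  intro l
  induction l with
  | nil =>
    intro _ f
    simp only [List.toFinset_nil, Finset.prod_empty, one_mul, DxL_nil]
    unfold bcoeff bchi
    simp
  | cons a l ih =>
    intro hnd f
    have ha : a ∉ l.toFinset := by
      simp only [List.mem_toFinset]
      exact (List.nodup_cons.1 hnd).1
    rw [List.toFinset_cons, bcoeff_insert hμ a l.toFinset ha f,
      ih (List.nodup_cons.1 hnd).2 (Dx a f), Finset.prod_insert ha, DxL_cons]
    ring

lemma Dx_update (a : ι) (f : (ι → Bool) → ℝ) (x : ι → Bool) (b : Bool) :
    Dx a f (Function.update x a b) = Dx a f x := by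
  unfold Dx
  rw [Function.update_idem, Function.update_idem]

lemma Dx_mul_const (a : ι) (c : ℝ) (f : (ι → Bool) → ℝ) :
    Dx a (fun y => c * f y) = fun x => c * Dx a f x := by
  funext x; unfold Dx; ring

lemma DxL_mul_const : ∀ (l : List ι) (c : ℝ) (f : (ι → Bool) → ℝ) (x : ι → Bool),
    DxL l (fun y => c * f y) x = c * DxL l f x := by
  intro l
  induction l with
  | nil => intro c f x; rfl
  | cons a l ih =>
    intro c f x
    rw [DxL_cons, DxL_cons, Dx_mul_const, ih]

lemma DphiL_eq (μ : ι → ℝ) : ∀ (l : List ι) (f : (ι → Bool) → ℝ) (x : ι → Bool),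
    DphiL μ l f x = (l.map (fun i => Real.sqrt (1 - μ i ^ 2))).prod * DxL l f x := by
  intro l
  induction l with
  | nil => intro f x; simp [DphiL, DxL]
  | cons a l ih =>
    intro f x
    rw [DphiL_cons, ih, List.map_cons, List.prod_cons, DxL_cons]
    have : Dphi μ a f = fun y => Real.sqrt (1 - μ a ^ 2) * Dx a f y := rfl
    rw [this, DxL_mul_const]
    ring

-- variance & second moment bounds
lemma bVarFn_eq (μ : ι → ℝ) (f : (ι → Bool) → ℝ) :
    bVarFn μ f = bexp μ (fun x => f x ^ 2) - (bexp μ f) ^ 2 := by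
  unfold bVarFn
  have h1 : (fun x => (f x - bexp μ f) ^ 2)
      = fun x => f x ^ 2 + ((-(2 * bexp μ f)) * f x + bexp μ f ^ 2 * 1) := by
    funext x; ring
  rw [h1, bexp_add, bexp_add, bexp_mul_const, bexp_mul_const, bexp_const]
  ring

lemma bexp_sq_ge {μ : ι → ℝ} (hμ : validBias μ) (f : (ι → Bool) → ℝ) :
    (bexp μ f) ^ 2 ≤ bexp μ (fun x => f x ^ 2) := by
  have h := bexp_nonneg hμ (f := fun x => (f x - bexp μ f) ^ 2) (fun x => sq_nonneg _)
  rw [show bexp μ (fun x => (f x - bexp μ f) ^ 2) = bVarFn μ f from rfl, bVarFn_eq] at h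
  linarith

lemma bexp_sq_Dphi_le {μ : ι → ℝ} (hμ : validBias μ) (a : ι) (f : (ι → Bool) → ℝ) :
    bexp μ (fun x => Dphi μ a f x ^ 2) ≤ bexp μ (fun x => f x ^ 2) := by
  rw [bexp_split μ a (fun x => f x ^ 2), bexp_split μ a (fun x => Dphi μ a f x ^ 2)]
  refine bexp_mono hμ fun x => ?_
  have hD : ∀ b : Bool, Dphi μ a f (Function.update x a b) = Dphi μ a f x := by
    intro b; unfold Dphi; rw [Dx_update]
  rw [hD true, hD false]
  have hs := sigma_sq hμ a
  have hμa := hμ a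
  unfold Dphi Dx
  set A := f (Function.update x a true)
  set B := f (Function.update x a false)
  have expand : (Real.sqrt (1 - μ a ^ 2) * ((A - B) / 2)) ^ 2
      = (1 - μ a ^ 2) * ((A - B) / 2) ^ 2 := by
    rw [mul_pow, hs]
  rw [expand]
  nlinarith [sq_nonneg ((1 + μ a) * A + (1 - μ a) * B)]

lemma bexp_sq_Dphi_le_var {μ : ι → ℝ} (hμ : validBias μ) (a : ι) (f : (ι → Bool) → ℝ) :
    bexp μ (fun x => Dphi μ a f x ^ 2) ≤ bVarFn μ f := by
  rw [bVarFn_eq]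
  set Y : (ι → Bool) → ℝ := fun x =>
    (1 + μ a) / 2 * f (Function.update x a true) + (1 - μ a) / 2 * f (Function.update x a false)
    with hY
  have hEf : bexp μ f = bexp μ Y := bexp_split μ a f
  have hsq : bexp μ (fun x => f x ^ 2)
      = bexp μ (fun x => Dphi μ a f x ^ 2) + bexp μ (fun x => Y x ^ 2) := by
    rw [bexp_split μ a (fun x => f x ^ 2), ← bexp_add]
    congr 1
    funext x
    have hD : ∀ b : Bool, Dphi μ a f (Function.update x a b) = Dphi μ a f x := by
      intro b; unfold Dphi; rw [Dx_update]
    have hs := sigma_sq hμ a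
    unfold Dphi Dx
    simp only [hY]
    set A := f (Function.update x a true)
    set B := f (Function.update x a false)
    have expand : (Real.sqrt (1 - μ a ^ 2) * ((A - B) / 2)) ^ 2
        = (1 - μ a ^ 2) * ((A - B) / 2) ^ 2 := by
      rw [mul_pow, hs]
    rw [expand]
    ring
  have hJ : (bexp μ Y) ^ 2 ≤ bexp μ (fun x => Y x ^ 2) := bexp_sq_ge hμ Y
  rw [hsq, hEf]
  linarith

lemma bexp_sq_DphiL_le {μ : ι → ℝ} (hμ : validBias μ) :
    ∀ (l : List ι) (f : (ι → Bool) → ℝ),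
      bexp μ (fun x => DphiL μ l f x ^ 2) ≤ bexp μ (fun x => f x ^ 2) := by
  intro l
  induction l with
  | nil => intro f; exact le_refl _
  | cons a l ih =>
    intro f
    rw [DphiL_cons]
    exact (ih (Dphi μ a f)).trans (bexp_sq_Dphi_le hμ a f)

lemma bexp_sq_DphiL_le_var {μ : ι → ℝ} (hμ : validBias μ) (a : ι) (l : List ι)
    (f : (ι → Bool) → ℝ) :
    bexp μ (fun x => DphiL μ (a :: l) f x ^ 2) ≤ bVarFn μ f := by
  rw [DphiL_cons]
  exact (bexp_sq_DphiL_le hμ l (Dphi μ a f)).trans (bexp_sq_Dphi_le_var hμ a f)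

-- dyadic values and boundedness
lemma DxL_dyadic : ∀ (l : List ι) (n : ℕ) (f : (ι → Bool) → ℝ),
    (∀ x, ∃ z : ℤ, f x = z / 2 ^ n) → ∀ x, ∃ z : ℤ, DxL l f x = z / 2 ^ (n + l.length) := by
  intro l
  induction l with
  | nil => intro n f h x; simpa [DxL_nil] using h x
  | cons a l ih =>
    intro n f h x
    have hDx : ∀ y, ∃ z : ℤ, Dx a f y = z / 2 ^ (n + 1) := by
      intro y
      obtain ⟨z1, hz1⟩ := h (Function.update y a true)
      obtain ⟨z2, hz2⟩ := h (Function.update y a false)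
      refine ⟨z1 - z2, ?_⟩
      unfold Dx
      rw [hz1, hz2, pow_succ]
      push_cast
      ring
    rw [DxL_cons]
    obtain ⟨z, hz⟩ := ih (n + 1) (Dx a f) hDx x
    have he : n + 1 + l.length = n + (a :: l).length := by simp [List.length_cons]; omega
    exact ⟨z, by rw [hz, he]⟩
  
lemma DxL_bdd : ∀ (l : List ι) (f : (ι → Bool) → ℝ),
    (∀ x, |f x| ≤ 1) → ∀ x, |DxL l f x| ≤ 1 := by
  intro l
  induction l with
  | nil => intro f h x; exact h x
  | cons a l ih =>
    intro f h x
    rw [DxL_cons]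
    refine ih (Dx a f) (fun y => ?_) x
    unfold Dx
    rw [abs_div]
    have := abs_sub (f (Function.update y a true)) (f (Function.update y a false))
    have h1 := h (Function.update y a true)
    have h2 := h (Function.update y a false)
    rw [abs_two]
    rw [div_le_one (by norm_num)]
    calc |f (Function.update y a true) - f (Function.update y a false)|
        ≤ |f (Function.update y a true)| + |f (Function.update y a false)| := abs_sub _ _
      _ ≤ 2 := by linarith

lemma dyadic_sq_ge {t : ℝ} {z : ℤ} {n m : ℕ} (h : t = z / 2 ^ n) (hnm : n ≤ m) :
    |t| ≤ 2 ^ m * t ^ 2 := by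
  rcases eq_or_ne z 0 with hz | hz
  · simp [h, hz]
  · have h1 : (1 : ℝ) ≤ |(z : ℝ)| := by
      rw [← Int.cast_abs]
      exact_mod_cast Int.one_le_abs hz
    have h2 : (2:ℝ) ^ n ≤ 2 ^ m := pow_le_pow_right₀ (by norm_num) hnm
    have ht : |t| = |(z:ℝ)| / 2 ^ n := by
      rw [h, abs_div]
      congr 1
      rw [abs_of_pos]
      positivity
    have htpos : (2:ℝ)^n * |t| = |(z:ℝ)| := by
      rw [ht]; field_simp
    have : (1:ℝ) ≤ 2 ^ m * |t| := by
      calc (1:ℝ) ≤ |(z:ℝ)| := h1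
        _ = 2^n * |t| := htpos.symm
        _ ≤ 2^m * |t| := by
            apply mul_le_mul_of_nonneg_right h2 (abs_nonneg _)
    calc |t| = 1 * |t| := (one_mul _).symm
      _ ≤ (2 ^ m * |t|) * |t| := by
          apply mul_le_mul_of_nonneg_right this (abs_nonneg _)
      _ = 2 ^ m * t ^ 2 := by
          rw [mul_assoc, ← abs_mul, ← sq, abs_of_nonneg (sq_nonneg t)]

lemma ent_ineq {t : ℝ} (h0 : 0 < t) : t * Real.log (1 / t ^ 2) ≤ 2 * (1 - t) := by
  have hl : Real.log (1 / t) ≤ 1 / t - 1 := Real.log_le_sub_one_of_pos (by positivity)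
  have h2 : Real.log (1 / t ^ 2) = 2 * Real.log (1 / t) := by
    rw [show (1:ℝ) / t ^ 2 = (1 / t) ^ 2 by ring, Real.log_pow]
    push_cast; ring
  rw [h2]
  have := mul_le_mul_of_nonneg_left hl h0.le
  calc t * (2 * Real.log (1/t)) = 2 * (t * Real.log (1/t)) := by ring
    _ ≤ 2 * (t * (1/t - 1)) := by linarith
    _ = 2 * (1 - t) := by field_simp

end Aux

/-- Per-term entropy bound via the variance of a biased discrete derivative. -/
theorem stmt14 {k : ℕ} (μ : Fin k → ℝ) (hμ : validBias μ)
    (F : (Fin k → Bool) → ℝ) (hF : ∀ x, F x = 1 ∨ F x = -1)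
    (S : Finset (Fin k)) (hS : S.Nonempty) (hne : bcoeff μ F S ≠ 0)
    (j : Fin k) (hj : j ∈ S) :
    (bcoeff μ F S) ^ 2 *
        Real.logb 2 ((∏ i ∈ S, (1 - μ i ^ 2)) / (bcoeff μ F S) ^ 2)
      ≤ (2 ^ (2 * k) / Real.log 2) * bVarFn μ (Dphi μ j F) := by
  classical
  have hk : 1 ≤ k := j.pos
  set σ : Fin k → ℝ := fun i => Real.sqrt (1 - μ i ^ 2) with hσdef
  set lT : List (Fin k) := (S.erase j).toList with hlTdef
  set l : List (Fin k) := j :: lT with hldef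
  have hjl : j ∉ lT := by
    intro hmem
    exact absurd rfl (Finset.mem_erase.1 (Finset.mem_toList.1 hmem)).1
  have hnd : l.Nodup := List.nodup_cons.2 ⟨hjl, Finset.nodup_toList _⟩
  have hlfin : l.toFinset = S := by
    rw [hldef, List.toFinset_cons, hlTdef, Finset.toList_toFinset, Finset.insert_erase hj]
  set h : (Fin k → Bool) → ℝ := DxL l F with hhdef
  set m : ℝ := bexp μ h with hmdef
  have hcoeff : bcoeff μ F S = (∏ i ∈ S, σ i) * m := by
    rw [← hlfin]; exact bcoeff_eq_DxL hμ l hnd F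
  have hσpos : 0 < ∏ i ∈ S, σ i := Finset.prod_pos fun i _ => sigma_pos hμ i
  have hPpos : 0 < ∏ i ∈ S, (1 - μ i ^ 2) :=
    Finset.prod_pos fun i _ => sq_pos_of_bias hμ i
  have hP : (∏ i ∈ S, σ i) ^ 2 = ∏ i ∈ S, (1 - μ i ^ 2) := by
    rw [← Finset.prod_pow]
    exact Finset.prod_congr rfl fun i _ => sigma_sq hμ i
  have hm0 : m ≠ 0 := by
    intro h0
    exact hne (by rw [hcoeff, h0, mul_zero])
  have hFb : ∀ x, |F x| ≤ 1 := fun x => by rcases hF x with hx | hx <;> simp [hx]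
  have hhb : ∀ x, |h x| ≤ 1 := DxL_bdd l F hFb
  have habs : |m| ≤ 1 := by
    calc |m| ≤ bexp μ (fun x => |h x|) := abs_bexp_le hμ h
      _ ≤ bexp μ (fun _ => (1:ℝ)) := bexp_mono hμ fun x => hhb x
      _ = 1 := bexp_const μ 1
  have hmabs : 0 < |m| := abs_pos.2 hm0
  have habs_le_exp : |m| ≤ bexp μ (fun x => |h x|) := abs_bexp_le hμ h
  have hc2 : bcoeff μ F S ^ 2 = (∏ i ∈ S, (1 - μ i ^ 2)) * m ^ 2 := by
    rw [hcoeff, mul_pow, hP]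
  have hm2pos : 0 < m ^ 2 := by positivity
  have hratio : (∏ i ∈ S, (1 - μ i ^ 2)) / bcoeff μ F S ^ 2 = 1 / m ^ 2 := by
    rw [hc2]
    field_simp
  have hlog2 : 0 < Real.log 2 := Real.log_pos (by norm_num)
  set V : ℝ := bVarFn μ (Dphi μ j F) with hVdef
  have hVnonneg : 0 ≤ V :=
    bexp_nonneg hμ fun x => sq_nonneg _
  -- the key entropy estimate at t = |m|
  have hkey : m ^ 2 * Real.log (1 / m ^ 2) ≤ 2 * (|m| - m ^ 2) := by
    have h1 : |m| * Real.log (1 / |m| ^ 2) ≤ 2 * (1 - |m|) := ent_ineq hmabs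
    have h2 : Real.log (1 / |m| ^ 2) = Real.log (1 / m ^ 2) := by rw [sq_abs]
    rw [h2] at h1
    have h3 := mul_le_mul_of_nonneg_left h1 (abs_nonneg m)
    calc m ^ 2 * Real.log (1 / m ^ 2) = |m| * (|m| * Real.log (1 / m ^ 2)) := by
          rw [← mul_assoc, ← sq_abs m]; ring
      _ ≤ |m| * (2 * (1 - |m|)) := h3
      _ = 2 * (|m| - |m| ^ 2) := by ring
      _ = 2 * (|m| - m ^ 2) := by rw [sq_abs]
  -- main estimate
  have hmain : (∏ i ∈ S, (1 - μ i ^ 2)) * m ^ 2 * Real.log (1 / m ^ 2)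
      ≤ 2 ^ (2 * k) * V := by
    have h2k : (2:ℝ) ≤ 2 ^ (2 * k) := by
      calc (2:ℝ) = 2 ^ 1 := (pow_one 2).symm
        _ ≤ 2 ^ (2 * k) := pow_le_pow_right₀ one_le_two (by omega)
    rcases hcase : lT with _ | ⟨a, rest⟩
    · -- S = {j}
      have hl1 : l = [j] := by rw [hldef, hcase]
      have hS1 : S = {j} := by
        rw [← hlfin, hl1]
        simp
      have hh1 : h = Dx j F := by rw [hhdef, hl1]; rfl
      have hProd1 : (∏ i ∈ S, (1 - μ i ^ 2)) = 1 - μ j ^ 2 := by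
        rw [hS1, Finset.prod_singleton]
      have hsqabs : ∀ x, h x ^ 2 = |h x| := by
        intro x
        rw [hh1]
        unfold Dx
        rcases hF (Function.update x j true) with h1 | h1 <;>
          rcases hF (Function.update x j false) with h2 | h2 <;>
          rw [h1, h2] <;> norm_num
      have hGfun : Dphi μ j F = fun x => σ j * h x := by
        funext x
        rw [hh1]
        rfl
      have hV : V = (1 - μ j ^ 2) * (bexp μ (fun x => h x ^ 2) - m ^ 2) := by
        rw [hVdef, bVarFn_eq, hGfun]
        have e1 : bexp μ (fun x => (σ j * h x) ^ 2)
            = (1 - μ j ^ 2) * bexp μ (fun x => h x ^ 2) := by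
          rw [show (fun x => (σ j * h x) ^ 2) = fun x => (1 - μ j ^ 2) * h x ^ 2 by
            funext x; rw [mul_pow, hσdef]; rw [sigma_sq hμ j], bexp_mul_const]
        have e2 : bexp μ (fun x => σ j * h x) = σ j * m := bexp_mul_const μ (σ j) h
        rw [e1, e2, mul_pow, hσdef, sigma_sq hμ j]
        ring
      have hEsq : |m| ≤ bexp μ (fun x => h x ^ 2) := by
        calc |m| ≤ bexp μ (fun x => |h x|) := habs_le_exp
          _ = bexp μ (fun x => h x ^ 2) := by
              congr 1; funext x; rw [hsqabs x]
      have hVge : (1 - μ j ^ 2) * (|m| - m ^ 2) ≤ V := by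
        rw [hV]
        apply mul_le_mul_of_nonneg_left _ (sq_pos_of_bias hμ j).le
        linarith
      calc (∏ i ∈ S, (1 - μ i ^ 2)) * m ^ 2 * Real.log (1 / m ^ 2)
          = (1 - μ j ^ 2) * (m ^ 2 * Real.log (1 / m ^ 2)) := by rw [hProd1]; ring
        _ ≤ (1 - μ j ^ 2) * (2 * (|m| - m ^ 2)) :=
            mul_le_mul_of_nonneg_left hkey (sq_pos_of_bias hμ j).le
        _ = 2 * ((1 - μ j ^ 2) * (|m| - m ^ 2)) := by ring
        _ ≤ 2 * V := by linarith [hVge]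
        _ ≤ 2 ^ (2 * k) * V := by
            apply mul_le_mul_of_nonneg_right h2k hVnonneg
    · -- |S| ≥ 2
      have hchain : bexp μ (fun x => DphiL μ lT (Dphi μ j F) x ^ 2) ≤ V := by
        rw [hcase]
        exact bexp_sq_DphiL_le_var hμ a rest (Dphi μ j F)
      have hDxLG : ∀ x, DxL lT (Dphi μ j F) x = σ j * h x := by
        intro x
        have : Dphi μ j F = fun y => σ j * Dx j F y := rfl
        rw [this, DxL_mul_const]
        rfl
      have hprodl : (l.map σ).prod = ∏ i ∈ S, σ i := by
        rw [← hlfin, List.prod_toFinset σ hnd]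
      have hDphiLG : ∀ x, DphiL μ lT (Dphi μ j F) x = (∏ i ∈ S, σ i) * h x := by
        intro x
        rw [DphiL_eq μ lT (Dphi μ j F) x, hDxLG x, ← hprodl, hldef]
        rw [List.map_cons, List.prod_cons]
        show (List.map σ lT).prod * (σ j * h x) = σ j * (List.map σ lT).prod * h x
        ring
      have hsq : bexp μ (fun x => DphiL μ lT (Dphi μ j F) x ^ 2)
          = (∏ i ∈ S, (1 - μ i ^ 2)) * bexp μ (fun x => h x ^ 2) := by
        rw [show (fun x => DphiL μ lT (Dphi μ j F) x ^ 2)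
            = fun x => (∏ i ∈ S, (1 - μ i ^ 2)) * h x ^ 2 by
          funext x; rw [hDphiLG x, mul_pow, hP], bexp_mul_const]
      -- dyadic lower bound
      have hlen : l.length ≤ k := by
        have h1 : l.length = lT.length + 1 := by rw [hldef]; rfl
        have h2 : lT.length = (S.erase j).card := by rw [hlTdef, Finset.length_toList]
        have h3 : (S.erase j).card = S.card - 1 := Finset.card_erase_of_mem hj
        have h4 : S.card ≤ k := by
          have := Finset.card_le_univ S
          simpa using this
        have h5 : 1 ≤ S.card := Finset.card_pos.2 hS
        omega
      have hdyadic : ∀ x, ∃ z : ℤ, h x = z / 2 ^ (0 + l.length) := by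
        refine DxL_dyadic l 0 F (fun x => ?_)
        rcases hF x with hx | hx
        · exact ⟨1, by rw [hx]; norm_num⟩
        · exact ⟨-1, by rw [hx]; push_cast; norm_num⟩
      have hpt : ∀ x, |h x| ≤ 2 ^ k * h x ^ 2 := by
        intro x
        obtain ⟨z, hz⟩ := hdyadic x
        exact dyadic_sq_ge hz (by omega)
      have hEsq : |m| ≤ 2 ^ k * bexp μ (fun x => h x ^ 2) := by
        calc |m| ≤ bexp μ (fun x => |h x|) := habs_le_exp
          _ ≤ bexp μ (fun x => 2 ^ k * h x ^ 2) := bexp_mono hμ hpt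
          _ = 2 ^ k * bexp μ (fun x => h x ^ 2) := bexp_mul_const μ _ _
      have hEsqnn : 0 ≤ bexp μ (fun x => h x ^ 2) := bexp_nonneg hμ fun x => sq_nonneg _
      have h2kk : (2:ℝ) ^ (2 * k) = 2 ^ k * 2 ^ k := by
        rw [two_mul, pow_add]
      have hkey2 : m ^ 2 * Real.log (1 / m ^ 2) ≤ 2 ^ k * |m| := by
        have : (2:ℝ) ≤ 2 ^ k := by
          calc (2:ℝ) = 2 ^ 1 := (pow_one 2).symm
            _ ≤ 2 ^ k := pow_le_pow_right₀ one_le_two hk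
        calc m ^ 2 * Real.log (1 / m ^ 2) ≤ 2 * (|m| - m ^ 2) := hkey
          _ ≤ 2 * |m| := by nlinarith [sq_nonneg m]
          _ ≤ 2 ^ k * |m| := mul_le_mul_of_nonneg_right this (abs_nonneg m)
      calc (∏ i ∈ S, (1 - μ i ^ 2)) * m ^ 2 * Real.log (1 / m ^ 2)
          = (∏ i ∈ S, (1 - μ i ^ 2)) * (m ^ 2 * Real.log (1 / m ^ 2)) := by ring
        _ ≤ (∏ i ∈ S, (1 - μ i ^ 2)) * (2 ^ k * |m|) :=
            mul_le_mul_of_nonneg_left hkey2 hPpos.le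
        _ ≤ (∏ i ∈ S, (1 - μ i ^ 2)) * (2 ^ k * (2 ^ k * bexp μ (fun x => h x ^ 2))) := by
            apply mul_le_mul_of_nonneg_left _ hPpos.le
            apply mul_le_mul_of_nonneg_left hEsq (by positivity)
        _ = 2 ^ (2 * k) * ((∏ i ∈ S, (1 - μ i ^ 2)) * bexp μ (fun x => h x ^ 2)) := by
            rw [h2kk]; ring
        _ = 2 ^ (2 * k) * bexp μ (fun x => DphiL μ lT (Dphi μ j F) x ^ 2) := by rw [hsq]
        _ ≤ 2 ^ (2 * k) * V := by
            apply mul_le_mul_of_nonneg_left hchain (by positivity)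
  -- conclude
  rw [hc2]
  have hratio2 : (∏ i ∈ S, (1 - μ i ^ 2)) / ((∏ i ∈ S, (1 - μ i ^ 2)) * m ^ 2) = 1 / m ^ 2 := by
    field_simp
  rw [hratio2, Real.logb]
  calc (∏ i ∈ S, (1 - μ i ^ 2)) * m ^ 2 * (Real.log (1 / m ^ 2) / Real.log 2)
      = ((∏ i ∈ S, (1 - μ i ^ 2)) * m ^ 2 * Real.log (1 / m ^ 2)) / Real.log 2 := by ring
    _ ≤ (2 ^ (2 * k) * V) / Real.log 2 := by gcongr
    _ = 2 ^ (2 * k) / Real.log 2 * V := by ring
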